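/- arXiv:2510.07906 — 2 statements merged into one kernel-verified Lean document; each statement's English description precedes it below -/
import Mathlib

section
/- If ρ is a correlated equilibrium that is not correlated perfect, then every correlated equilibrium ρ' whose minimal product support contains that of ρ (S^{ρ'} ⊇ S^ρ) is also not correlated perfect. -/
open Finset Filter Topology

variable {ι : Type*} [Fintype ι] [DecidableEq ι]

def IsDist {S : ι → Type*} [∀ i, Fintype (S i)] (ρ : (∀ i, S i) → ℝ) : Prop :=
  (∀ s, 0 ≤ ρ s) ∧ ∑ s, ρ s = 1

def CompletelyMixed {S : ι → Type*} [∀ i, Fintype (S i)] (ρ : (∀ i, S i) → ℝ) : Prop :=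
  ∀ s, 0 < ρ s

def marg {S : ι → Type*} [∀ i, Fintype (S i)] [∀ i, DecidableEq (S i)]
    (ρ : (∀ i, S i) → ℝ) (i : ι) (si : S i) : ℝ :=
  ∑ s : ∀ j, S j, if s i = si then ρ s else 0

/-- The quantity `∑_{s_{-i}} ρ(s_i, s_{-i}) (u_i(s_i,s_{-i}) - u_i(s_i', s_{-i}))`. -/
def devGain {S : ι → Type*} [∀ i, Fintype (S i)] [∀ i, DecidableEq (S i)]
    (u : ∀ _ : ι, (∀ j, S j) → ℝ) (ρ : (∀ i, S i) → ℝ) (i : ι) (si si' : S i) : ℝ :=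
  ∑ s : ∀ j, S j, if s i = si then ρ s * (u i s - u i (Function.update s i si')) else 0

def IsCE {S : ι → Type*} [∀ i, Fintype (S i)] [∀ i, DecidableEq (S i)]
    (u : ∀ _ : ι, (∀ j, S j) → ℝ) (ρ : (∀ i, S i) → ℝ) : Prop :=
  IsDist ρ ∧ ∀ i (si si' : S i), 0 ≤ devGain u ρ i si si'

def IsCPE {S : ι → Type*} [∀ i, Fintype (S i)] [∀ i, DecidableEq (S i)]
    (u : ∀ _ : ι, (∀ j, S j) → ℝ) (ρ : (∀ i, S i) → ℝ) : Prop :=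
  IsDist ρ ∧ ∃ ρk : ℕ → (∀ i, S i) → ℝ,
    (∀ k, IsDist (ρk k) ∧ CompletelyMixed (ρk k)) ∧
    (∀ s, Tendsto (fun k => ρk k s) atTop (𝓝 (ρ s))) ∧
    ∀ k i si, 0 < marg ρ i si → ∀ si', 0 ≤ devGain u (ρk k) i si si'


lemma devGain_lin {S : ι → Type*} [∀ i, Fintype (S i)] [∀ i, DecidableEq (S i)]
    (u : ∀ _ : ι, (∀ j, S j) → ℝ) (ρ σ : (∀ i, S i) → ℝ) (a b : ℝ) (i : ι) (si si' : S i) :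
    devGain u (fun s => a * ρ s + b * σ s) i si si'
      = a * devGain u ρ i si si' + b * devGain u σ i si si' := by
  unfold devGain
  rw [Finset.mul_sum, Finset.mul_sum, ← Finset.sum_add_distrib]
  refine Finset.sum_congr rfl fun s _ => ?_
  split_ifs <;> ring

/-- If `ρ` is a correlated equilibrium that is not correlated perfect, then every correlated
equilibrium with (weakly) larger minimal product support is also not correlated perfect. -/
theorem not_cpe_of_support_superset {S : ι → Type*} [∀ i, Fintype (S i)] [∀ i, DecidableEq (S i)] (u : ∀ _ : ι, (∀ j, S j) → ℝ)
    (ρ ρ' : (∀ i, S i) → ℝ) (hce : IsCE u ρ) (hce' : IsCE u ρ')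
    (h : ¬ IsCPE u ρ)
    (hsupp : ∀ i (si : S i), 0 < marg ρ i si → 0 < marg ρ' i si) :
    ¬ IsCPE u ρ' := by
  intro hcpe'
  apply h
  obtain ⟨_, ρk, hk, _, hbr⟩ := hcpe'
  refine ⟨hce.1, fun k s => (1 - 1/(k+1:ℝ)) * ρ s + (1/(k+1:ℝ)) * ρk k s, ?_, ?_, ?_⟩
  · intro k
    have hε0 : (0:ℝ) < 1/(k+1:ℝ) := by positivity
    have hε1 : 1/(k+1:ℝ) ≤ 1 := by
      rw [div_le_one (by positivity)]; linarith [Nat.cast_nonneg (α := ℝ) k]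
    refine ⟨⟨fun s => ?_, ?_⟩, fun s => ?_⟩
    · have := hce.1.1 s
      have := (hk k).1.1 s
      nlinarith
    · rw [Finset.sum_add_distrib, ← Finset.mul_sum, ← Finset.mul_sum, hce.1.2, (hk k).1.2]
      ring
    · have := hce.1.1 s
      have := (hk k).2 s
      nlinarith
  · intro s
    have hε : Tendsto (fun k : ℕ => 1/(k+1:ℝ)) atTop (𝓝 0) :=
      tendsto_one_div_add_atTop_nhds_zero_nat
    have h1 : Tendsto (fun k : ℕ => (1 - 1/(k+1:ℝ)) * ρ s) atTop (𝓝 (ρ s)) := by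
      have := (((tendsto_const_nhds (x := (1:ℝ)) (f := atTop (α := ℕ))).sub hε).mul
        (tendsto_const_nhds (x := ρ s)))
      simpa using this
    have h2 : Tendsto (fun k : ℕ => (1/(k+1:ℝ)) * ρk k s) atTop (𝓝 0) := by
      apply squeeze_zero (fun k => mul_nonneg (by positivity) ((hk k).1.1 s))
        (g := fun k : ℕ => 1/(k+1:ℝ))
      · intro k
        have h1' : ρk k s ≤ 1 := by
          have := Finset.single_le_sum (f := ρk k) (fun t _ => (hk k).1.1 t)
            (Finset.mem_univ s)
          linarith [(hk k).1.2]
        have : (0:ℝ) < 1/(k+1:ℝ) := by positivity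
        nlinarith [(hk k).1.1 s]
      · exact hε
    simpa using h1.add h2
  · intro k i si hm si'
    show 0 ≤ devGain u (fun s => (1 - 1/(k+1:ℝ)) * ρ s + (1/(k+1:ℝ)) * ρk k s) i si si'
    rw [devGain_lin]
    have h1 := hce.2 i si si'
    have h2 := hbr k i si (hsupp i si hm) si'
    have hε0 : (0:ℝ) < 1/(k+1:ℝ) := by positivity
    have hε1 : 1/(k+1:ℝ) ≤ 1 := by
      rw [div_le_one (by positivity)]; linarith [Nat.cast_nonneg (α := ℝ) k]
    nlinarith
end

section
/- In Myerson's three-person game, no strict convex combination of the degenerate distributions δ_{(y_1,y_2,y_3)} and δ_{(z_1,z_2,y_3)} is correlated perfect; hence the set of correlated perfect equilibria is not convex. -/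
/-!
The profiles (y₁,y₂,y₃) and (z₁,z₂,y₃) are pure Nash equilibria. Mixing either point mass
with a small weight of a suitable completely mixed distribution keeps every recommendation
obedient, so both point masses are correlated perfect.

Conversely, sum the deviation gains of players 1 and 2 from y and from z to x. Along any
distribution σ this sum is the mass σ puts on x₃ minus σ(x₁,x₂,x₃), which is positive when σ is
completely mixed, so some recommendation of y or z is disobeyed. Hence a correlated perfect
equilibrium cannot recommend both y and z to both players, as every strict mixture of the two
point masses does.
-/

open Finset Filter Topology

/-- Strategy profiles: player 1 and 2 choose in `Fin 3` (0 = x, 1 = y, 2 = z),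
player 3 chooses in `Fin 2` (0 = x₃, 1 = y₃). -/
abbrev Prof : Type := Fin 3 × Fin 3 × Fin 2

/-- Player 1's payoff in Myerson's three-person game. -/
noncomputable def u1 : Prof → ℝ :=
  fun p => if p.2.2 = 1 then 3 else !![1, 2, 2; 0, 3, 0; 0, 0, 3] p.1 p.2.1

/-- Player 2's payoff. -/
noncomputable def u2 : Prof → ℝ :=
  fun p => if p.2.2 = 1 then 3 else !![1, 0, 0; 2, 0, 3; 2, 3, 0] p.1 p.2.1

/-- Player 3's payoff. -/
noncomputable def u3 : Prof → ℝ :=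
  fun p => if p.2.2 = 1 then 1 else if p.1 = 0 ∧ p.2.1 = 0 then 2 else 0

def IsDist3 (ρ : Prof → ℝ) : Prop := (∀ p, 0 ≤ ρ p) ∧ ∑ p, ρ p = 1

def Mixed3 (ρ : Prof → ℝ) : Prop := ∀ p, 0 < ρ p

def marg1 (ρ : Prof → ℝ) (a : Fin 3) : ℝ := ∑ b : Fin 3, ∑ c : Fin 2, ρ (a, b, c)
def marg2 (ρ : Prof → ℝ) (b : Fin 3) : ℝ := ∑ a : Fin 3, ∑ c : Fin 2, ρ (a, b, c)
def marg3 (ρ : Prof → ℝ) (c : Fin 2) : ℝ := ∑ a : Fin 3, ∑ b : Fin 3, ρ (a, b, c)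

/-- Correlated perfect equilibrium of Myerson's game: a completely mixed sequence
converging to `ρ` along which every recommendation in the support stays optimal. -/
def IsCPE3 (ρ : Prof → ℝ) : Prop :=
  IsDist3 ρ ∧ ∃ ρk : ℕ → Prof → ℝ,
    (∀ k, IsDist3 (ρk k) ∧ Mixed3 (ρk k)) ∧
    (∀ p, Tendsto (fun k => ρk k p) atTop (𝓝 (ρ p))) ∧
    (∀ k a, 0 < marg1 ρ a → ∀ a',
      ∑ b : Fin 3, ∑ c : Fin 2, ρk k (a, b, c) * u1 (a', b, c) ≤
        ∑ b : Fin 3, ∑ c : Fin 2, ρk k (a, b, c) * u1 (a, b, c)) ∧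
    (∀ k b, 0 < marg2 ρ b → ∀ b',
      ∑ a : Fin 3, ∑ c : Fin 2, ρk k (a, b, c) * u2 (a, b', c) ≤
        ∑ a : Fin 3, ∑ c : Fin 2, ρk k (a, b, c) * u2 (a, b, c)) ∧
    (∀ k c, 0 < marg3 ρ c → ∀ c',
      ∑ a : Fin 3, ∑ b : Fin 3, ρk k (a, b, c) * u3 (a, b, c') ≤
        ∑ a : Fin 3, ∑ b : Fin 3, ρk k (a, b, c) * u3 (a, b, c))

/- `slotᵢ s q r` is the profile in which player `i` plays `s` and the other two play `q`, `r`.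
`condPayoff slotᵢ uᵢ σ a a'` is the sum appearing in `IsCPE3`: player `i`'s payoff from `a'` when
told `a`, not divided by the probability of being told `a`. -/
def slot1 : Fin 3 → Fin 3 → Fin 2 → Prof := fun a b c => (a, b, c)
def slot2 : Fin 3 → Fin 3 → Fin 2 → Prof := fun b a c => (a, b, c)
def slot3 : Fin 2 → Fin 3 → Fin 3 → Prof := fun c a b => (a, b, c)

section
variable {α β γ : Type*} [Fintype β] [Fintype γ]

def condPayoff (e : α → β → γ → Prof) (u σ : Prof → ℝ) (a a' : α) : ℝ :=
  ∑ b, ∑ c, σ (e a b c) * u (e a' b c)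

def Obedient (e : α → β → γ → Prof) (u σ : Prof → ℝ) (a : α) : Prop :=
  ∀ a', condPayoff e u σ a a' ≤ condPayoff e u σ a a

lemma condPayoff_mix (e : α → β → γ → Prof) (u ρ W : Prof → ℝ) (s t : ℝ) (a a' : α) :
    condPayoff e u (fun p => s * ρ p + t * W p) a a' =
      s * condPayoff e u ρ a a' + t * condPayoff e u W a a' := by
  simp only [condPayoff, add_mul, sum_add_distrib, mul_sum, mul_assoc]

lemma Obedient.mix {e : α → β → γ → Prof} {u ρ W : Prof → ℝ} {a : α} {s t : ℝ}
    (hρ : Obedient e u ρ a) (hW : Obedient e u W a) (hs : 0 ≤ s) (ht : 0 ≤ t) :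
    Obedient e u (fun p => s * ρ p + t * W p) a := fun a' => by
  rw [condPayoff_mix, condPayoff_mix]
  exact add_le_add (mul_le_mul_of_nonneg_left (hρ a') hs) (mul_le_mul_of_nonneg_left (hW a') ht)

end

lemma IsDist3.mix {ρ W : Prof → ℝ} (hρ : IsDist3 ρ) (hW : IsDist3 W) {s t : ℝ}
    (hs : 0 ≤ s) (ht : 0 ≤ t) (hst : s + t = 1) : IsDist3 (fun p => s * ρ p + t * W p) := by
  refine ⟨fun p => add_nonneg (mul_nonneg hs (hρ.1 p)) (mul_nonneg ht (hW.1 p)), ?_⟩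
  rw [sum_add_distrib, ← mul_sum, ← mul_sum, hρ.2, hW.2, mul_one, mul_one, hst]

lemma Mixed3.mix {ρ W : Prof → ℝ} (hρ : ∀ p, 0 ≤ ρ p) (hW : Mixed3 W) {s t : ℝ}
    (hs : 0 ≤ s) (ht : 0 < t) : Mixed3 (fun p => s * ρ p + t * W p) := fun p =>
  add_pos_of_nonneg_of_pos (mul_nonneg hs (hρ p)) (mul_pos ht (hW p))

lemma isCPE3_of_obedient_perturbation {ρ W : Prof → ℝ} (hρ : IsDist3 ρ) (hW : IsDist3 W)
    (hWmix : Mixed3 W)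
    (h1 : ∀ a, 0 < marg1 ρ a → Obedient slot1 u1 ρ a ∧ Obedient slot1 u1 W a)
    (h2 : ∀ b, 0 < marg2 ρ b → Obedient slot2 u2 ρ b ∧ Obedient slot2 u2 W b)
    (h3 : ∀ c, 0 < marg3 ρ c → Obedient slot3 u3 ρ c ∧ Obedient slot3 u3 W c) :
    IsCPE3 ρ := by
  set ε : ℕ → ℝ := fun k => 1 / ((k : ℝ) + 1)
  have hε_pos (k : ℕ) : 0 < ε k := Nat.one_div_pos_of_nat
  have hε_le (k : ℕ) : 0 ≤ 1 - ε k := sub_nonneg.2 <|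
    div_le_one_of_le₀ (le_add_of_nonneg_left k.cast_nonneg) (by positivity)
  have hε : Tendsto ε atTop (𝓝 0) := tendsto_one_div_add_atTop_nhds_zero_nat
  refine ⟨hρ, fun k p => (1 - ε k) * ρ p + ε k * W p, fun k => ⟨?_, ?_⟩, fun p => ?_,
    fun k a ha => ?_, fun k b hb => ?_, fun k c hc => ?_⟩
  · exact hρ.mix hW (hε_le k) (hε_pos k).le (sub_add_cancel 1 (ε k))
  · exact Mixed3.mix hρ.1 hWmix (hε_le k) (hε_pos k)
  · simpa using (((tendsto_const_nhds (x := (1 : ℝ))).sub hε).mul_const (ρ p)).add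
      (hε.mul_const (W p))
  · exact (h1 a ha).1.mix (h1 a ha).2 (hε_le k) (hε_pos k).le
  · exact (h2 b hb).1.mix (h2 b hb).2 (hε_le k) (hε_pos k).le
  · exact (h3 c hc).1.mix (h3 c hc).2 (hε_le k) (hε_pos k).le

lemma aggregate_gain_eq (σ : Prof → ℝ) :
    (condPayoff slot1 u1 σ 1 0 - condPayoff slot1 u1 σ 1 1) +
      (condPayoff slot1 u1 σ 2 0 - condPayoff slot1 u1 σ 2 2) +
      (condPayoff slot2 u2 σ 1 0 - condPayoff slot2 u2 σ 1 1) +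
      (condPayoff slot2 u2 σ 2 0 - condPayoff slot2 u2 σ 2 2) =
      ∑ a, ∑ b, σ (a, b, 0) - σ (0, 0, 0) := by
  simp only [condPayoff, slot1, slot2, u1, u2, Fin.isValue, Matrix.of_apply, Matrix.cons_val',
    Matrix.cons_val_fin_one, Matrix.cons_val_zero, Matrix.cons_val_one, Matrix.cons_val, mul_ite,
    mul_one, mul_zero, zero_add, zero_ne_one, ↓reduceIte, Fin.sum_univ_two, Fin.sum_univ_three]
  ring

lemma not_isCPE3_of_marg_pos {ρ : Prof → ℝ} (h1y : 0 < marg1 ρ 1) (h1z : 0 < marg1 ρ 2)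
    (h2y : 0 < marg2 ρ 1) (h2z : 0 < marg2 ρ 2) : ¬ IsCPE3 ρ := by
  rintro ⟨-, σ, hσ, -, hob1, hob2, -⟩
  have hmix := (hσ 0).2
  have hpos : 0 < ∑ a, ∑ b, σ 0 (a, b, 0) - σ 0 (0, 0, 0) := by
    simp only [Fin.sum_univ_three]
    linarith [hmix (0, 1, 0), hmix (0, 2, 0), hmix (1, 0, 0), hmix (1, 1, 0), hmix (1, 2, 0),
      hmix (2, 0, 0), hmix (2, 1, 0), hmix (2, 2, 0)]
  have o1y : Obedient slot1 u1 (σ 0) 1 := hob1 0 1 h1y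
  have o1z : Obedient slot1 u1 (σ 0) 2 := hob1 0 2 h1z
  have o2y : Obedient slot2 u2 (σ 0) 1 := hob2 0 1 h2y
  have o2z : Obedient slot2 u2 (σ 0) 2 := hob2 0 2 h2z
  linarith [aggregate_gain_eq (σ 0), o1y 0, o1z 0, o2y 0, o2z 0]

def pointMass (p₀ : Prof) : Prof → ℝ := fun p => if p = p₀ then 1 else 0

lemma isDist3_pointMass (p₀ : Prof) : IsDist3 (pointMass p₀) :=
  ⟨fun p => by unfold pointMass; split_ifs <;> norm_num, by simp [pointMass]⟩

section
variable {a b : Fin 3} {c : Fin 2} {u : Prof → ℝ}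

lemma eq_of_marg1_pointMass_pos {a' : Fin 3} (h : 0 < marg1 (pointMass (a, b, c)) a') :
    a' = a := by
  by_contra hne
  refine h.ne' (sum_eq_zero fun _ _ => sum_eq_zero fun _ _ => ?_)
  simp [pointMass, hne]

lemma eq_of_marg2_pointMass_pos {b' : Fin 3} (h : 0 < marg2 (pointMass (a, b, c)) b') :
    b' = b := by
  by_contra hne
  refine h.ne' (sum_eq_zero fun _ _ => sum_eq_zero fun _ _ => ?_)
  simp [pointMass, hne]

lemma eq_of_marg3_pointMass_pos {c' : Fin 2} (h : 0 < marg3 (pointMass (a, b, c)) c') :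
    c' = c := by
  by_contra hne
  refine h.ne' (sum_eq_zero fun _ _ => sum_eq_zero fun _ _ => ?_)
  simp [pointMass, hne]

lemma condPayoff_slot1_pointMass (a' : Fin 3) :
    condPayoff slot1 u (pointMass (a, b, c)) a a' = u (a', b, c) := by
  simp only [condPayoff, slot1, pointMass, Prod.mk.injEq, true_and, ite_and, ite_mul, one_mul,
    zero_mul, sum_ite_eq', sum_ite_irrel, sum_const_zero, mem_univ, if_true]

lemma condPayoff_slot2_pointMass (b' : Fin 3) :
    condPayoff slot2 u (pointMass (a, b, c)) b b' = u (a, b', c) := by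
  simp only [condPayoff, slot2, pointMass, Prod.mk.injEq, true_and, ite_and, ite_mul, one_mul,
    zero_mul, sum_ite_eq', sum_ite_irrel, sum_const_zero, mem_univ, if_true]

lemma condPayoff_slot3_pointMass (c' : Fin 2) :
    condPayoff slot3 u (pointMass (a, b, c)) c c' = u (a, b, c') := by
  simp only [condPayoff, slot3, pointMass, Prod.mk.injEq, and_true, ite_and, ite_mul, one_mul,
    zero_mul, sum_ite_eq', sum_ite_irrel, sum_const_zero, mem_univ, if_true]

lemma isCPE3_pointMass {W : Prof → ℝ} (hW : IsDist3 W) (hWmix : Mixed3 W)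
    (hnash1 : ∀ a', u1 (a', b, c) ≤ u1 (a, b, c)) (hnash2 : ∀ b', u2 (a, b', c) ≤ u2 (a, b, c))
    (hnash3 : ∀ c', u3 (a, b, c') ≤ u3 (a, b, c)) (hW1 : Obedient slot1 u1 W a)
    (hW2 : Obedient slot2 u2 W b) (hW3 : Obedient slot3 u3 W c) :
    IsCPE3 (pointMass (a, b, c)) := by
  refine isCPE3_of_obedient_perturbation (isDist3_pointMass _) hW hWmix ?_ ?_ ?_
  · rintro a' ha'
    obtain rfl := eq_of_marg1_pointMass_pos ha'
    exact ⟨fun a' => by simpa only [condPayoff_slot1_pointMass] using hnash1 a', hW1⟩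
  · rintro b' hb'
    obtain rfl := eq_of_marg2_pointMass_pos hb'
    exact ⟨fun b' => by simpa only [condPayoff_slot2_pointMass] using hnash2 b', hW2⟩
  · rintro c' hc'
    obtain rfl := eq_of_marg3_pointMass_pos hc'
    exact ⟨fun c' => by simpa only [condPayoff_slot3_pointMass] using hnash3 c', hW3⟩

end

/- Weight 1 everywhere except 3 on (y₁,y₂,x₃) and 7 on (z₁,y₂,x₃): on the x₃-layer player 1 told
y₁ is then indifferent between x₁ and y₁ (1 + 2·3 + 2·1 = 3·3), and player 2 told y₂ between x₂
and y₂ (1 + 2·3 + 2·7 = 3·7). `trembleZ` is the mirror image under y ↔ z. -/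
noncomputable def trembleY : Prof → ℝ :=
  fun p => (if p = (1, 1, 0) then 3 else if p = (2, 1, 0) then 7 else 1) / 26

noncomputable def trembleZ : Prof → ℝ :=
  fun p => (if p = (2, 2, 0) then 3 else if p = (1, 2, 0) then 7 else 1) / 26

lemma isCPE3_pointMass_yyy : IsCPE3 (pointMass (1, 1, 1)) := by
  have hmix : Mixed3 trembleY := fun p => by unfold trembleY; split_ifs <;> norm_num
  refine isCPE3_pointMass ⟨fun p => (hmix p).le, ?_⟩ hmix ?_ ?_ ?_ ?_ ?_ ?_
  · simp only [trembleY, Fintype.sum_prod_type, Fin.sum_univ_three, Fin.sum_univ_two]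
    norm_num [Prod.ext_iff, Fin.ext_iff]
  all_goals
    intro d
    fin_cases d <;>
      simp [condPayoff, slot1, slot2, slot3, trembleY, u1, u2, u3, Fin.sum_univ_three] <;> norm_num

lemma isCPE3_pointMass_zzy : IsCPE3 (pointMass (2, 2, 1)) := by
  have hmix : Mixed3 trembleZ := fun p => by unfold trembleZ; split_ifs <;> norm_num
  refine isCPE3_pointMass ⟨fun p => (hmix p).le, ?_⟩ hmix ?_ ?_ ?_ ?_ ?_ ?_
  · simp only [trembleZ, Fintype.sum_prod_type, Fin.sum_univ_three, Fin.sum_univ_two]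
    norm_num [Prod.ext_iff, Fin.ext_iff]
  all_goals
    intro d
    fin_cases d <;>
      simp [condPayoff, slot1, slot2, slot3, trembleZ, u1, u2, u3, Fin.sum_univ_three] <;> norm_num

lemma not_isCPE3_mix {l : ℝ} (hl0 : 0 < l) (hl1 : l < 1) :
    ¬ IsCPE3 (fun p => l * pointMass (1, 1, 1) p + (1 - l) * pointMass (2, 2, 1) p) := by
  have hl : 0 < 1 - l := sub_pos.2 hl1
  apply not_isCPE3_of_marg_pos <;>
    simpa [marg1, marg2, pointMass, Fin.sum_univ_three, Fin.sum_univ_two]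

/-- No strict convex combination of `δ_{(y₁,y₂,y₃)}` and `δ_{(z₁,z₂,y₃)}` is correlated
perfect; hence the set of correlated perfect equilibria of Myerson's game is not convex. -/
theorem myerson_mixture_not_cpe :
    (∀ l : ℝ, 0 < l → l < 1 →
      ¬ IsCPE3 (fun p => l * (if p = (1, 1, 1) then 1 else 0)
        + (1 - l) * (if p = (2, 2, 1) then 1 else 0))) ∧
    ¬ Convex ℝ {ρ : Prof → ℝ | IsCPE3 ρ} := by
  refine ⟨fun l hl0 hl1 => not_isCPE3_mix hl0 hl1, fun hconv => ?_⟩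
  have hhalf : IsCPE3 ((1 / 2 : ℝ) • pointMass (1, 1, 1) + (1 / 2 : ℝ) • pointMass (2, 2, 1)) :=
    hconv isCPE3_pointMass_yyy isCPE3_pointMass_zzy (by norm_num) (by norm_num) (by norm_num)
  refine not_isCPE3_mix (l := 1 / 2) (by norm_num) (by norm_num) ?_
  convert hhalf using 1
  ext p
  norm_num
end
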